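/- Let $d_k=\Big(\frac{k}{2e}\Big)^{k/2}\frac{2\sqrt\pi}{\Gamma\big(\frac{k+1}{2}\big)}$ for integers $k\ge 1$. Then the sequence $(d_k)_{k\ge1}$ is strictly decreasing, i.e. $d_k>d_{k+1}$ for every $k\ge 1$, and $d_k>\sqrt2$ for every $k\ge 1$; in particular $d_1=\sqrt{2\pi/e}\approx 1.520$. -/

import Mathlib

/-- The entropy (Gaussian density) of the shrinking sphere self-shrinker `𝕊ᵏ`:
`d_k = (k/(2e))^{k/2} · 2√π / Γ((k+1)/2)`. -/
noncomputable def entropyD (k : ℕ) : ℝ :=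
  ((k : ℝ) / (2 * Real.exp 1)) ^ ((k : ℝ) / 2)
    * (2 * Real.sqrt Real.pi / Real.Gamma (((k : ℝ) + 1) / 2))

/-!
Squaring removes the half-integer exponent, `d_k² = (k/(2e))^k · 4π / Γ((k+1)/2)²`, and the
functional equation of `Γ` gives `d_{k+2}² = c_k d_k²` with `c_k = (k+2)^(k+2) / (e² k^k (k+1)²)`.
Now `log c_k = φ(k)` for a function `φ` with `φ'(x) = log (1 + 2/x) - 2/(x+1) > 0`, so `c_k`
increases strictly, and Stirling's formula gives `d_k² → 2` along even and along odd `k`.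
Hence the ratio `d_{k+1+2j}² / d_{k+2j}²`, which gets multiplied by `c_{k+1+2j} / c_{k+2j} > 1`
when `j` increases, climbs strictly to `1`: it starts below `1`, i.e. `d_{k+1} < d_k`. A strictly
decreasing sequence with limit `√2` stays above `√2`.
-/

open Real Filter Topology Set Stirling
open scoped Nat

lemma entropyD_nonneg (k : ℕ) : 0 ≤ entropyD k := by
  unfold entropyD
  have := Gamma_pos_of_pos (by positivity : (0 : ℝ) < ((k : ℝ) + 1) / 2)
  positivity

lemma entropyD_pos {k : ℕ} (hk : 0 < k) : 0 < entropyD k := by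
  unfold entropyD
  have := Gamma_pos_of_pos (by positivity : (0 : ℝ) < ((k : ℝ) + 1) / 2)
  have : (0 : ℝ) < k := by exact_mod_cast hk
  positivity

lemma entropyD_sq (k : ℕ) :
    entropyD k ^ 2 = ((k : ℝ) / (2 * exp 1)) ^ k * (4 * π / Gamma (((k : ℝ) + 1) / 2) ^ 2) := by
  unfold entropyD
  rw [mul_pow, div_pow, mul_pow, sq_sqrt pi_pos.le, ← rpow_natCast _ 2,
    ← rpow_mul (by positivity)]
  norm_num

noncomputable def entropyRatio (k : ℕ) : ℝ :=
  ((k : ℝ) + 2) ^ (k + 2) / (exp 1 ^ 2 * (k : ℝ) ^ k * ((k : ℝ) + 1) ^ 2)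

lemma entropyRatio_pos {k : ℕ} (hk : 0 < k) : 0 < entropyRatio k := by
  have : (0 : ℝ) < k := by exact_mod_cast hk
  unfold entropyRatio
  positivity

lemma entropyD_add_two_sq {k : ℕ} (hk : 0 < k) :
    entropyD (k + 2) ^ 2 = entropyRatio k * entropyD k ^ 2 := by
  have hk0 : (k : ℝ) ≠ 0 := by positivity
  have hG := (Gamma_pos_of_pos (by positivity : (0 : ℝ) < ((k : ℝ) + 1) / 2)).ne'
  have hGamma : Gamma ((((k + 2 : ℕ) : ℝ) + 1) / 2) = ((k + 1) / 2) * Gamma (((k : ℝ) + 1) / 2) := by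
    rw [← Gamma_add_one (by positivity)]
    push_cast
    ring_nf
  rw [entropyD_sq, entropyD_sq, hGamma, entropyRatio]
  push_cast
  field_simp
  rw [div_pow, div_pow, mul_pow, mul_pow]
  field_simp
  ring

noncomputable def logEntropyRatio (x : ℝ) : ℝ :=
  (x + 2) * log (x + 2) - x * log x - 2 * log (x + 1) - 2

lemma log_entropyRatio {k : ℕ} (hk : 0 < k) : log (entropyRatio k) = logEntropyRatio k := by
  have : (0 : ℝ) < k := by exact_mod_cast hk
  rw [entropyRatio, log_div (by positivity) (by positivity), log_mul (by positivity) (by positivity),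
    log_mul (by positivity) (by positivity), log_pow, log_pow, log_pow, log_pow, log_exp,
    logEntropyRatio]
  push_cast
  ring

lemma hasDerivAt_logEntropyRatio {x : ℝ} (hx : 0 < x) :
    HasDerivAt logEntropyRatio (log (x + 2) - log x - 2 / (x + 1)) x := by
  have h2 := (hasDerivAt_mul_log (by positivity : x + 2 ≠ 0)).comp_add_const x 2
  have h0 := hasDerivAt_mul_log hx.ne'
  have h1 := ((hasDerivAt_id' x).add_const 1).log (by positivity : x + 1 ≠ 0)
  exact (((h2.sub h0).sub (h1.const_mul 2)).sub_const 2).congr_deriv (by ring)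

lemma strictMonoOn_logEntropyRatio : StrictMonoOn logEntropyRatio (Ioi 0) := by
  refine strictMonoOn_of_deriv_pos (convex_Ioi 0)
    (fun x hx => (hasDerivAt_logEntropyRatio hx).continuousAt.continuousWithinAt) ?_
  intro x hx
  rw [interior_Ioi] at hx
  have hx : (0 : ℝ) < x := hx
  have h := lt_log_one_add_of_pos (by positivity : 0 < 2 / x)
  rw [(hasDerivAt_logEntropyRatio hx).deriv, ← log_div (by positivity) hx.ne', sub_pos]
  have e1 : 2 * (2 / x) / (2 / x + 2) = 2 / (x + 1) := by field_simp; ring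
  have e2 : 1 + 2 / x = (x + 2) / x := by field_simp
  rwa [e1, e2] at h

lemma entropyRatio_lt_succ {k : ℕ} (hk : 0 < k) : entropyRatio k < entropyRatio (k + 1) := by
  have hk' : (0 : ℝ) < k := by exact_mod_cast hk
  rw [← log_lt_log_iff (entropyRatio_pos hk) (entropyRatio_pos k.succ_pos), log_entropyRatio hk,
    log_entropyRatio k.succ_pos, Nat.cast_succ]
  exact strictMonoOn_logEntropyRatio hk' (mem_Ioi.2 (by linarith)) (lt_add_one _)

lemma Real.Gamma_nat_add_half_eq_factorial (m : ℕ) :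
    Gamma (m + 1 / 2) = (2 * m)! * √π / (4 ^ m * m !) := by
  induction m with
  | zero => rw [Nat.cast_zero, zero_add, Gamma_one_half_eq]; simp
  | succ m ih =>
    rw [Nat.cast_succ, add_right_comm, Gamma_add_one (by positivity), ih,
      show 2 * (m + 1) = 2 * m + 1 + 1 by ring, Nat.factorial_succ, Nat.factorial_succ,
      Nat.factorial_succ]
    push_cast
    field_simp
    ring

lemma stirlingSeq_sq (n : ℕ) :
    stirlingSeq n ^ 2 = (n ! : ℝ) ^ 2 / (2 * n * (n / exp 1) ^ (2 * n)) := by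
  rw [stirlingSeq, div_pow, mul_pow, sq_sqrt (by positivity), ← pow_mul, mul_comm n 2]

lemma entropyD_two_mul_sq {m : ℕ} (hm : 0 < m) :
    entropyD (2 * m) ^ 2 = 2 * (stirlingSeq m / stirlingSeq (2 * m)) ^ 2 := by
  have hm : (m : ℝ) ≠ 0 := by positivity
  have harg : (((2 * m : ℕ) : ℝ) + 1) / 2 = m + 1 / 2 := by push_cast; ring
  rw [entropyD_sq, harg, Gamma_nat_add_half_eq_factorial, div_pow (stirlingSeq m), stirlingSeq_sq,
    stirlingSeq_sq]
  push_cast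
  field_simp
  rw [sq_sqrt pi_pos.le, show (4 : ℝ) ^ m = 2 ^ (2 * m) by rw [pow_mul]; norm_num]
  ring

lemma entropyD_two_mul_add_one_sq {m : ℕ} (hm : 0 < m) :
    entropyD (2 * m + 1) ^ 2
      = π * (1 + 1 / (2 * m : ℝ)) ^ (2 * m) * (2 + 1 / (m : ℝ)) / (exp 1 * stirlingSeq m ^ 2) := by
  have hm : (m : ℝ) ≠ 0 := by positivity
  have harg : (((2 * m + 1 : ℕ) : ℝ) + 1) / 2 = m + 1 := by push_cast; ring
  rw [entropyD_sq, harg, Gamma_nat_eq_factorial, stirlingSeq_sq]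
  push_cast
  rw [div_pow, div_pow, one_add_div (by positivity), div_pow, pow_succ]
  field_simp
  ring

lemma tendsto_entropyD_two_mul_sq :
    Tendsto (fun m : ℕ => entropyD (2 * m) ^ 2) atTop (𝓝 2) := by
  have hsqrt : √π ≠ 0 := by positivity
  have hratio : Tendsto (fun m : ℕ => stirlingSeq m / stirlingSeq (2 * m)) atTop (𝓝 1) := by
    simpa [div_self hsqrt, Pi.div_def, Function.comp_def] using tendsto_stirlingSeq_sqrt_pi.div
      (tendsto_stirlingSeq_sqrt_pi.comp (tendsto_id.const_mul_atTop' two_pos)) hsqrt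
  refine ((hratio.pow 2).const_mul 2).congr' ?_ |>.trans (by norm_num)
  filter_upwards [eventually_gt_atTop 0] with m hm
  exact (entropyD_two_mul_sq hm).symm

lemma tendsto_entropyD_two_mul_add_one_sq :
    Tendsto (fun m : ℕ => entropyD (2 * m + 1) ^ 2) atTop (𝓝 2) := by
  have hexp : Tendsto (fun m : ℕ => (1 + 1 / (2 * m : ℝ)) ^ (2 * m)) atTop (𝓝 (exp 1)) := by
    simpa [Function.comp_def] using
      (tendsto_one_add_div_pow_exp 1).comp (tendsto_id.const_mul_atTop' two_pos)
  have hlin : Tendsto (fun m : ℕ => 2 + 1 / (m : ℝ)) atTop (𝓝 2) := by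
    simpa using tendsto_one_div_atTop_nhds_zero_nat.const_add (2 : ℝ)
  have hstirling : Tendsto (fun m : ℕ => stirlingSeq m ^ 2) atTop (𝓝 π) := by
    simpa [sq_sqrt pi_pos.le] using tendsto_stirlingSeq_sqrt_pi.pow 2
  have hlim := ((hexp.const_mul π).mul hlin).div (hstirling.const_mul (exp 1)) (by positivity)
  refine (hlim.congr' ?_).trans (le_of_eq <| congrArg 𝓝 (by field_simp))
  filter_upwards [eventually_gt_atTop 0] with m hm
  exact (entropyD_two_mul_add_one_sq hm).symm

lemma Nat.tendsto_of_tendsto_even_of_tendsto_odd {α : Type*} {u : ℕ → α} {l : Filter α}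
    (heven : Tendsto (fun m => u (2 * m)) atTop l)
    (hodd : Tendsto (fun m => u (2 * m + 1)) atTop l) : Tendsto u atTop l := by
  intro s hs
  obtain ⟨a, ha⟩ := eventually_atTop.1 (heven hs)
  obtain ⟨b, hb⟩ := eventually_atTop.1 (hodd hs)
  refine eventually_atTop.2 ⟨2 * (a + b), fun n hn => ?_⟩
  obtain ⟨m, rfl | rfl⟩ := n.even_or_odd'
  · exact ha m (by omega)
  · exact hb m (by omega)

lemma tendsto_entropyD_sq : Tendsto (fun k => entropyD k ^ 2) atTop (𝓝 2) :=
  Nat.tendsto_of_tendsto_even_of_tendsto_odd tendsto_entropyD_two_mul_sq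
    tendsto_entropyD_two_mul_add_one_sq

lemma strictAnti_of_add_two_eq_mul {a p : ℕ → ℝ} {L : ℝ} (ha : ∀ n, 0 < a n)
    (hap : ∀ n, a (n + 2) = p n * a n) (hp : StrictMono p) (hL : L ≠ 0)
    (hlim : Tendsto a atTop (𝓝 L)) : StrictAnti a := by
  refine strictAnti_nat_of_succ_lt fun n => ?_
  have hp_pos (m : ℕ) : 0 < p m := pos_of_mul_pos_left ((hap m).symm ▸ ha (m + 2)) (ha m).le
  set r : ℕ → ℝ := fun j => a (n + 1 + 2 * j) / a (n + 2 * j) with hr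
  have hr_succ (j : ℕ) : r (j + 1) = p (n + 1 + 2 * j) / p (n + 2 * j) * r j := by
    have := (ha (n + 2 * j)).ne'
    have := (hp_pos (n + 2 * j)).ne'
    simp only [hr, show n + 1 + 2 * (j + 1) = n + 1 + 2 * j + 2 by ring,
      show n + 2 * (j + 1) = n + 2 * j + 2 by ring, hap]
    field_simp
  have hr_mono : StrictMono r := strictMono_nat_of_lt_succ fun j => by
    rw [hr_succ]
    refine lt_mul_of_one_lt_left (div_pos (ha _) (ha _)) ((one_lt_div (hp_pos _)).2 (hp ?_))
    omega
  have hr_lim : Tendsto r atTop (𝓝 1) := by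
    have hshift (m : ℕ) : Tendsto (fun j : ℕ => m + 2 * j) atTop atTop :=
      tendsto_atTop_atTop.2 fun b => ⟨b, fun j hj => by omega⟩
    have := (hlim.comp (hshift (n + 1))).div (hlim.comp (hshift n)) hL
    rwa [div_self hL] at this
  have h := (hr_mono.monotone.ge_of_tendsto hr_lim 1).trans_lt' (hr_mono zero_lt_one)
  simpa [hr, div_lt_one (ha n)] using h

lemma strictAnti_entropyD_succ_sq : StrictAnti fun k => entropyD (k + 1) ^ 2 :=
  strictAnti_of_add_two_eq_mul (p := fun k => entropyRatio (k + 1))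
    (fun k => pow_pos (entropyD_pos k.succ_pos) 2) (fun k => entropyD_add_two_sq k.succ_pos)
    (strictMono_nat_of_lt_succ fun k => entropyRatio_lt_succ k.succ_pos) two_ne_zero
    ((tendsto_add_atTop_iff_nat 1).2 tendsto_entropyD_sq)

lemma entropyD_succ_sq_lt {k : ℕ} (hk : 0 < k) : entropyD (k + 1) ^ 2 < entropyD k ^ 2 := by
  obtain ⟨m, rfl⟩ := Nat.exists_eq_succ_of_ne_zero hk.ne'
  exact strictAnti_entropyD_succ_sq m.lt_succ_self

lemma two_lt_entropyD_sq {k : ℕ} (hk : 0 < k) : 2 < entropyD k ^ 2 :=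
  (entropyD_succ_sq_lt hk).trans_le' <| strictAnti_entropyD_succ_sq.antitone.le_of_tendsto
    ((tendsto_add_atTop_iff_nat 1).2 tendsto_entropyD_sq) k

lemma entropyD_one : entropyD 1 = √(2 * π / exp 1) := by
  rw [← sqrt_sq (entropyD_nonneg 1), entropyD_sq]
  norm_num [Gamma_one]
  ring_nf

/-- The sequence `(d_k)` is strictly decreasing, each `d_k > √2`, and
`d_1 = √(2π/e)`. -/
theorem stmt18 :
    (∀ k : ℕ, 1 ≤ k → entropyD (k + 1) < entropyD k) ∧
    (∀ k : ℕ, 1 ≤ k → Real.sqrt 2 < entropyD k) ∧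
    entropyD 1 = Real.sqrt (2 * Real.pi / Real.exp 1) :=
  ⟨fun k hk => lt_of_pow_lt_pow_left₀ 2 (entropyD_nonneg k) (entropyD_succ_sq_lt hk),
    fun _ hk => (sqrt_lt' (entropyD_pos hk)).2 (two_lt_entropyD_sq hk), entropyD_one⟩
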